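/- Let k, n, m be natural numbers. Write C^{n∗}_{r} for the set of tuples x : Fin n → Fin (r+1) satisfying condition (∗) for the parameter k (for every i with i+1 < n, if (x(i+1):ℕ) < k then x(i) ≤ x(i+1)), viewed as a subposet of the pointwise order. Define β : C^{n∗}_{k+m+1} → (Fin (n+1) → Fin (k+m+2)) by prepending a 0 coordinate, β(z) = (0, z₁, ..., zₙ), and γ : C^{(n+1)∗}_{k+m} → (Fin (n+1) → Fin (k+m+2)) by adding 1 to every coordinate, γ(y) = (y₁+1, ..., y_{n+1}+1), where for γ the condition (∗) on the source is taken with parameter k and on the target with parameter k+1 (and for β with parameter k+1 on the target). Then: (1) β and γ land in C^{(n+1)∗}_{k+m+1} (tuples satisfying (∗) with parameter k+1); (2) β and γ are order-reflecting monotone maps; (3) the image of β is down-closed in C^{(n+1)∗}_{k+m+1}; (4) the images of β and γ are disjoint and their union is all of C^{(n+1)∗}_{k+m+1}; (5) for z in C^{n∗}_{k+m+1} and y in C^{(n+1)∗}_{k+m}, one has β(z) ≤ γ(y) if and only if there exists x in C^{n∗}_{k+m} (condition (∗) with parameter k) with z(i) ≤ x(i)+1 for all i and (0, x₁, ..., xₙ)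 ≤ y pointwise. -/

import Mathlib

/-!
The image of `β` consists of the tuples with first coordinate `0`. Under (∗) with parameter
`k + 1` a tuple whose first coordinate is nonzero has no zero coordinate at all, so it is `γ`
of its coordinatewise predecessor. The comparison `β z ≤ γ y` only involves the coordinates
`z i ≤ y (i+1) + 1`, and the witness `x` in (5) is the tail of `y`.
-/

/-- Condition (∗) with parameter `k` on a tuple `x : Fin n → Fin (s+1)`:
for each `i` with `i+1 < n`, if `(x (i+1) : ℕ) < k` then `x i ≤ x (i+1)`. -/
def StarCond (k : ℕ) {n s : ℕ} (x : Fin n → Fin (s + 1)) : Prop :=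
  ∀ (i : ℕ) (h : i + 1 < n), ((x ⟨i + 1, h⟩ : ℕ) < k) →
    x ⟨i, Nat.lt_of_succ_lt h⟩ ≤ x ⟨i + 1, h⟩

/-- Prepending a `0` coordinate: `(z₁, …, zₙ) ↦ (0, z₁, …, zₙ)`. -/
def prependZero {n s : ℕ} (z : Fin n → Fin (s + 1)) : Fin (n + 1) → Fin (s + 1) :=
  Fin.cons 0 z

/-- Adding `1` to every coordinate: `(y₁, …, yₙ) ↦ (y₁+1, …, yₙ+1)`. -/
def addOne {n s : ℕ} (y : Fin n → Fin (s + 1)) : Fin n → Fin (s + 2) :=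
  fun i => Fin.succ (y i)

section

variable {c n s : ℕ}

theorem StarCond.castSucc_le_succ {w : Fin (n + 1) → Fin (s + 1)} (hw : StarCond c w)
    (i : Fin n) (hi : (w i.succ : ℕ) < c) : w i.castSucc ≤ w i.succ :=
  hw i i.succ.isLt hi

theorem StarCond.tail {w : Fin (n + 1) → Fin (s + 1)} (hw : StarCond c w) :
    StarCond c (Fin.tail w) :=
  fun i h => hw (i + 1) (Nat.succ_lt_succ h)

-- Under (∗) with a positive parameter, a zero coordinate forces all earlier ones to vanish.
theorem StarCond.ne_zero_of_head_ne_zero {w : Fin (n + 1) → Fin (s + 1)}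
    (hw : StarCond (c + 1) w) (h0 : w 0 ≠ 0) (i : Fin (n + 1)) : w i ≠ 0 := by
  induction i using Fin.induction with
  | zero => exact h0
  | succ i ih =>
    intro hi
    have hle := hw.castSucc_le_succ i (by simp [hi])
    exact ih (Fin.le_zero_iff.mp (hi ▸ hle))

theorem starCond_prependZero {z : Fin n → Fin (s + 1)} (hz : StarCond c z) :
    StarCond c (prependZero z) := by
  rintro (_ | i) h hi
  · exact Fin.zero_le _
  · exact hz i (Nat.lt_of_succ_lt_succ h) hi

theorem starCond_addOne_iff {y : Fin n → Fin (s + 1)} :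
    StarCond (c + 1) (addOne y) ↔ StarCond c y := by
  simp only [StarCond, addOne, Fin.val_succ, Nat.add_lt_add_iff_right, Fin.succ_le_succ_iff]

theorem prependZero_le_iff {z : Fin n → Fin (s + 1)} {w : Fin (n + 1) → Fin (s + 1)} :
    prependZero z ≤ w ↔ z ≤ Fin.tail w := by
  simp [prependZero, Fin.cons_le]

theorem prependZero_le_prependZero_iff {z z' : Fin n → Fin (s + 1)} :
    prependZero z ≤ prependZero z' ↔ z ≤ z' := by
  simp [prependZero, Fin.cons_le_cons]

theorem prependZero_tail {w : Fin (n + 1) → Fin (s + 1)} (h0 : w 0 = 0) :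
    prependZero (Fin.tail w) = w := by
  rw [← Fin.cons_self_tail w, h0]
  rfl

theorem head_eq_zero_of_le_prependZero {z : Fin n → Fin (s + 1)} {w : Fin (n + 1) → Fin (s + 1)}
    (h : w ≤ prependZero z) : w 0 = 0 :=
  Fin.le_zero_iff.mp (h 0)

theorem addOne_le_addOne_iff {y y' : Fin n → Fin (s + 1)} : addOne y ≤ addOne y' ↔ y ≤ y' :=
  forall_congr' fun _ => Fin.succ_le_succ_iff

theorem prependZero_ne_addOne (z : Fin n → Fin (s + 2)) (y : Fin (n + 1) → Fin (s + 1)) :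
    prependZero z ≠ addOne y :=
  fun h => Fin.succ_ne_zero (y 0) (congrFun h 0).symm

theorem exists_addOne_eq {w : Fin n → Fin (s + 2)} (hw : ∀ i, w i ≠ 0) :
    ∃ y : Fin n → Fin (s + 1), addOne y = w :=
  ⟨fun i => (w i).pred (hw i), funext fun _ => Fin.succ_pred _ _⟩

theorem prependZero_le_addOne_iff {z : Fin n → Fin (s + 2)} {y : Fin (n + 1) → Fin (s + 1)} :
    prependZero z ≤ addOne y ↔ ∀ i, (z i : ℕ) ≤ y i.succ + 1 := by
  simp [Pi.le_def, Fin.forall_fin_succ, prependZero, addOne, Fin.le_def]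

theorem StarCond.exists_eq_prependZero_or_addOne {w : Fin (n + 1) → Fin (s + 2)}
    (hw : StarCond (c + 1) w) :
    (∃ z : Fin n → Fin (s + 2), StarCond (c + 1) z ∧ w = prependZero z) ∨
      ∃ y : Fin (n + 1) → Fin (s + 1), StarCond c y ∧ w = addOne y := by
  by_cases h0 : w 0 = 0
  · exact .inl ⟨Fin.tail w, hw.tail, (prependZero_tail h0).symm⟩
  · obtain ⟨y, rfl⟩ := exists_addOne_eq (hw.ne_zero_of_head_ne_zero h0)
    exact .inr ⟨y, starCond_addOne_iff.mp hw, rfl⟩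

end

/-- The square formed by `β : C^{n∗}_{k+m+1} → C^{(n+1)∗}_{k+m+1}` (prepend `0`) and
`γ : C^{(n+1)∗}_{k+m} → C^{(n+1)∗}_{k+m+1}` (add `1` to every coordinate) is a lax pushout:
(1) both maps land in the (∗)-subposet with parameter `k+1`; (2) both are monotone and
order-reflecting; (3) the image of `β` is down-closed; (4) the images are disjoint and
cover; (5) `β z ≤ γ y` iff there is `x ∈ C^{n∗}_{k+m}` with `z ≤ x + 1` pointwise and
`(0, x) ≤ y` pointwise. -/
theorem stmt_9 (k n m : ℕ) :
    -- (1) well-definedness of β and γ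
    (∀ z : Fin n → Fin (k + m + 2), StarCond (k + 1) z →
        StarCond (k + 1) (prependZero z)) ∧
    (∀ y : Fin (n + 1) → Fin (k + m + 1), StarCond k y →
        StarCond (k + 1) (addOne y)) ∧
    -- (2) β and γ are monotone and order-reflecting
    (∀ z z' : Fin n → Fin (k + m + 2), StarCond (k + 1) z → StarCond (k + 1) z' →
        (z ≤ z' ↔ prependZero z ≤ prependZero z')) ∧
    (∀ y y' : Fin (n + 1) → Fin (k + m + 1), StarCond k y → StarCond k y' →
        (y ≤ y' ↔ addOne y ≤ addOne y')) ∧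
    -- (3) the image of β is down-closed in C^{(n+1)∗}_{k+m+1}
    (∀ z : Fin n → Fin (k + m + 2), StarCond (k + 1) z →
        ∀ w : Fin (n + 1) → Fin (k + m + 2), StarCond (k + 1) w →
          w ≤ prependZero z →
          ∃ z' : Fin n → Fin (k + m + 2), StarCond (k + 1) z' ∧ w = prependZero z') ∧
    -- (4) the images of β and γ are disjoint and their union is everything
    (∀ (z : Fin n → Fin (k + m + 2)) (y : Fin (n + 1) → Fin (k + m + 1)),
        StarCond (k + 1) z → StarCond k y → prependZero z ≠ addOne y) ∧
    (∀ w : Fin (n + 1) → Fin (k + m + 2), StarCond (k + 1) w →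
        (∃ z : Fin n → Fin (k + m + 2), StarCond (k + 1) z ∧ w = prependZero z) ∨
        (∃ y : Fin (n + 1) → Fin (k + m + 1), StarCond k y ∧ w = addOne y)) ∧
    -- (5) the lax pushout comparison condition
    (∀ (z : Fin n → Fin (k + m + 2)) (y : Fin (n + 1) → Fin (k + m + 1)),
        StarCond (k + 1) z → StarCond k y →
        (prependZero z ≤ addOne y ↔
          ∃ x : Fin n → Fin (k + m + 1), StarCond k x ∧
            (∀ i, (z i : ℕ) ≤ (x i : ℕ) + 1) ∧
            prependZero x ≤ y)) := by
  refine ⟨fun _ => starCond_prependZero, fun _ => starCond_addOne_iff.mpr,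
    fun _ _ _ _ => prependZero_le_prependZero_iff.symm,
    fun _ _ _ _ => addOne_le_addOne_iff.symm,
    fun _ _ w hw hle => ⟨Fin.tail w, hw.tail,
      (prependZero_tail (head_eq_zero_of_le_prependZero hle)).symm⟩,
    fun z y _ _ => prependZero_ne_addOne z y,
    fun _ hw => hw.exists_eq_prependZero_or_addOne, ?_⟩
  intro z y _ hy
  rw [prependZero_le_addOne_iff]
  constructor
  · exact fun h => ⟨Fin.tail y, hy.tail, h, prependZero_le_iff.mpr le_rfl⟩
  · rintro ⟨x, -, hzx, hxy⟩ i
    exact (hzx i).trans (Nat.add_le_add_right (prependZero_le_iff.mp hxy i) 1)
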